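/- Consider the generalized Nash equilibrium problem with a shared constraint and optimization agents only: agents i = 1,…,N, with f_i : ℝ^n → ℝ continuously differentiable and f_i(·, x_{-i}) convex for every fixed x_{-i}, and each agent's feasible set K_i(x_{-i}) = {x_i ∈ ℝ^{n_i} : (x_i, x_{-i}) ∈ X} for a closed convex set X ⊆ ℝ^n. If x* solves VI(X, F) with F(x) = (∇_{x_1} f_1(x), …, ∇_{x_N} f_N(x)), then x* is a generalized Nash equilibrium; such a solution is called a variational equilibrium of the generalized Nash equilibrium problem. -/

import Mathlib

/-!
Testing the variational inequality at `update xs i xi`, which lies in `X` exactly when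
`xi ∈ Kᵢ(xs₋ᵢ)`, kills every summand except agent `i`'s, leaving `⟪∇ᵢ fᵢ(xs), xi - xsᵢ⟫ ≥ 0`.
Since `fᵢ(·, xs₋ᵢ)` is convex it lies above its tangent at `xsᵢ`, so `xsᵢ` minimises it on `Kᵢ`.
-/

open RealInnerProductSpace

theorem ConvexOn.add_fderiv_sub_le {E : Type*} [NormedAddCommGroup E] [NormedSpace ℝ E]
    {s : Set E} {g : E → ℝ} {g' : E →L[ℝ] ℝ} {x y : E}
    (hg : ConvexOn ℝ s g) (hx : x ∈ s) (hy : y ∈ s) (hg' : HasFDerivAt g g' x) :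
    g x + g' (y - x) ≤ g y := by
  set c : ℝ →ᵃ[ℝ] E := AffineMap.lineMap x y
  have hderiv : HasDerivAt (g ∘ c) (g' (y - x)) 0 := by
    refine HasFDerivAt.comp_hasDerivAt 0 ?_ AffineMap.hasDerivAt_lineMap
    simpa [c] using hg'
  have hslope := (hg.comp_affineMap c).le_slope_of_hasDerivAt
    (by simpa [c] using hx) (by simpa [c] using hy) zero_lt_one hderiv
  simp only [slope_def_field, Function.comp_apply, c, AffineMap.lineMap_apply_zero,
    AffineMap.lineMap_apply_one, sub_zero, div_one] at hslope
  linarith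

theorem ConvexOn.add_inner_gradient_sub_le {E : Type*} [NormedAddCommGroup E]
    [InnerProductSpace ℝ E] [CompleteSpace E] {s : Set E} {g : E → ℝ} {x y : E}
    (hg : ConvexOn ℝ s g) (hx : x ∈ s) (hy : y ∈ s) (hdiff : DifferentiableAt ℝ g x) :
    g x + ⟪gradient g x, y - x⟫ ≤ g y := by
  simpa [InnerProductSpace.toDual_apply_apply] using
    hg.add_fderiv_sub_le hx hy hdiff.hasGradientAt.hasFDerivAt

theorem Finset.sum_inner_update_sub {ι : Type*} [Fintype ι] [DecidableEq ι] {E : ι → Type*}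
    [∀ i, NormedAddCommGroup (E i)] [∀ i, InnerProductSpace ℝ (E i)]
    (v x : ∀ i, E i) (i : ι) (y : E i) :
    ∑ j, ⟪v j, Function.update x i y j - x j⟫ = ⟪v i, y - x i⟫ := by
  rw [Finset.sum_eq_single i]
  · simp
  · intro j _ hj
    simp [Function.update_of_ne hj]
  · simp

theorem stmt_15_general {N : ℕ} {n : Fin N → ℕ}
    (f : Fin N → ((j : Fin N) → EuclideanSpace ℝ (Fin (n j))) → ℝ)
    (X : Set ((j : Fin N) → EuclideanSpace ℝ (Fin (n j))))
    (hf : ∀ i, ContDiff ℝ 1 (f i))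
    (hfconv : ∀ i x, ConvexOn ℝ Set.univ (fun xi => f i (Function.update x i xi)))
    (K : (i : Fin N) → ((j : Fin N) → EuclideanSpace ℝ (Fin (n j))) →
      Set (EuclideanSpace ℝ (Fin (n i))))
    (hK : ∀ i x, K i x = {xi | Function.update x i xi ∈ X})
    (xs : (j : Fin N) → EuclideanSpace ℝ (Fin (n j)))
    -- xs solves VI(X, F)
    (hxsX : xs ∈ X)
    (hVI : ∀ x ∈ X,
      0 ≤ ∑ i, ⟪gradient (fun xi => f i (Function.update xs i xi)) (xs i),
        x i - xs i⟫) :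
    -- xs is a generalized Nash equilibrium
    ∀ i : Fin N, xs i ∈ K i xs ∧
      ∀ xi ∈ K i xs, f i xs ≤ f i (Function.update xs i xi) := by
  intro i
  simp only [hK, Set.mem_ofPred_eq, Function.update_eq_self]
  refine ⟨hxsX, fun xi hxi => ?_⟩
  have hdiff : DifferentiableAt ℝ (fun y => f i (Function.update xs i y)) (xs i) :=
    ((hf i).differentiable one_ne_zero _).comp _ (hasFDerivAt_update xs (xs i)).differentiableAt
  have hfirst := (hfconv i xs).add_inner_gradient_sub_le (Set.mem_univ _) (Set.mem_univ xi) hdiff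
  have hpartial := hVI _ hxi
  rw [Finset.sum_inner_update_sub] at hpartial
  simp only [Function.update_eq_self] at hfirst
  linarith

/-- Variational equilibrium: for a GNEP with shared constraint
Kᵢ(x₋ᵢ) = {xᵢ : (xᵢ, x₋ᵢ) ∈ X}, X closed convex, any solution of VI(X, F)
with F(x) = (∇_{x₁}f₁(x), …, ∇_{x_N}f_N(x)) is a generalized Nash equilibrium. -/
theorem stmt_15 {N : ℕ} {n : Fin N → ℕ}
    (f : Fin N → ((j : Fin N) → EuclideanSpace ℝ (Fin (n j))) → ℝ)
    (X : Set ((j : Fin N) → EuclideanSpace ℝ (Fin (n j))))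
    (hXclosed : IsClosed X) (hXconv : Convex ℝ X)
    (hf : ∀ i, ContDiff ℝ 1 (f i))
    (hfconv : ∀ i x, ConvexOn ℝ Set.univ (fun xi => f i (Function.update x i xi)))
    (K : (i : Fin N) → ((j : Fin N) → EuclideanSpace ℝ (Fin (n j))) →
      Set (EuclideanSpace ℝ (Fin (n i))))
    (hK : ∀ i x, K i x = {xi | Function.update x i xi ∈ X})
    (xs : (j : Fin N) → EuclideanSpace ℝ (Fin (n j)))
    -- xs solves VI(X, F)
    (hxsX : xs ∈ X)
    (hVI : ∀ x ∈ X,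
      0 ≤ ∑ i, ⟪gradient (fun xi => f i (Function.update xs i xi)) (xs i),
        x i - xs i⟫) :
    -- xs is a generalized Nash equilibrium
    ∀ i : Fin N, xs i ∈ K i xs ∧
      ∀ xi ∈ K i xs, f i xs ≤ f i (Function.update xs i xi) :=
  stmt_15_general f X hf hfconv K hK xs hxsX hVI
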